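/- arXiv:0812.3644 — 3 statements merged into one kernel-verified Lean document; each statement's English description precedes it below -/
import Mathlib

section
/- Let N ≥ 2. Let w₂ be the constant skew-symmetric N×N matrix with (w₂)_{ij} = 1 for i < j, and let w₃ be the structure matrix on ℝ^N defined for i < j by (w₃)_{ij}(q) = e^{q_{i-1}−q_i} + (1 − δ_{i+1,j}) e^{q_i−q_{i+1}} + e^{q_{j-1}−q_j} + e^{q_j−q_{j+1}} (omitting any term with an undefined index), extended by skew-symmetry. Then w₂ and w₃ are compatible Poisson structures: their sum w₂ + w₃ satisfies the Jacobi identity, i.e. for all i, j, k, Σ_{l=1}^{N} ( (w₂+w₃)_{li} ∂(w₂+w₃)_{jk}/∂q_l + (w₂+w₃)_{lj} ∂(w₂+w₃)_{ki}/∂q_l + (w₂+w₃)_{lk} ∂(w₂+w₃)_{ij}/∂q_l ) = 0 identically on ℝ^N. -/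
/-!
The Jacobiator of a skew-symmetric structure matrix is alternating in `(i, j, k)`, so it
suffices to treat `i < j < k`. Writing `a m = e^{q_{m-1} - q_m}`, every entry of `w₂ + w₃` is
affine in the `a m`, and the derivative of `a m` along a vector `v` is `a m * (v_{m-1} - v_m)`.
For `i < j < k` the Jacobiator is therefore a polynomial in the `a m` whose shape depends only on
the relative position of `i`, `j`, `k`, and it vanishes in each of the finitely many shapes.
-/

open Real

/-- Partial derivative `∂f/∂q_l` at `q`. -/
noncomputable def pd {n : ℕ} (f : (Fin n → ℝ) → ℝ) (x : Fin n → ℝ) (l : Fin n) : ℝ :=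
  fderiv ℝ f x (Pi.single l 1)

/-- One-based exponential term: `Eterm N q m = e^{q_m - q_{m+1}}` for `1 ≤ m ≤ N-1`,
and `0` (the term is omitted) otherwise. -/
noncomputable def Eterm (N : ℕ) (q : Fin N → ℝ) (m : ℕ) : ℝ :=
  if h : 1 ≤ m ∧ m < N then Real.exp (q ⟨m - 1, by omega⟩ - q ⟨m, by omega⟩) else 0

/-- The constant skew-symmetric matrix `w₂` with `(w₂)_{ij} = 1` for `i < j`. -/
def w2 (N : ℕ) : Matrix (Fin N) (Fin N) ℝ :=
  fun i j => if i.val < j.val then 1 else if j.val < i.val then -1 else 0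

/-- The structure matrix `w₃` on `ℝ^N` (see the paper): for one-based `i < j`,
`(w₃)_{ij} = e^{q_{i-1}-q_i} + (1-δ_{i+1,j}) e^{q_i-q_{i+1}} + e^{q_{j-1}-q_j} + e^{q_j-q_{j+1}}`
(undefined terms omitted), extended by skew-symmetry. -/
noncomputable def w3 (N : ℕ) (q : Fin N → ℝ) : Matrix (Fin N) (Fin N) ℝ :=
  fun i j =>
    let e : Fin N → Fin N → ℝ := fun i j =>
      Eterm N q i.val + (if j.val = i.val + 1 then 0 else 1) * Eterm N q (i.val + 1)
        + Eterm N q j.val + Eterm N q (j.val + 1)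
    if i.val < j.val then e i j
    else if j.val < i.val then -(e j i)
    else 0

open Finset

section Jacobiator

variable {n : ℕ}

lemma sum_mul_pd (f : (Fin n → ℝ) → ℝ) (x g : Fin n → ℝ) :
    ∑ l, g l * pd f x l = fderiv ℝ f x g := by
  conv_rhs => rw [← univ_sum_single g]
  simp only [pd, map_sum]
  refine sum_congr rfl fun l _ => ?_
  rw [← smul_eq_mul, ← map_smul, ← Pi.single_smul', smul_eq_mul, mul_one]

variable (P : (Fin n → ℝ) → Matrix (Fin n) (Fin n) ℝ) (q : Fin n → ℝ)

noncomputable def jacobiator (i j k : Fin n) : ℝ :=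
  ∑ l, (P q l i * pd (fun y => P y j k) q l + P q l j * pd (fun y => P y k i) q l
    + P q l k * pd (fun y => P y i j) q l)

lemma jacobiator_eq_fderiv (i j k : Fin n) :
    jacobiator P q i j k = fderiv ℝ (fun y => P y j k) q (fun l => P q l i)
      + fderiv ℝ (fun y => P y k i) q (fun l => P q l j)
      + fderiv ℝ (fun y => P y i j) q (fun l => P q l k) := by
  simp only [jacobiator, sum_add_distrib, sum_mul_pd]

variable {P}

lemma fderiv_apply_swap (hP : ∀ y a b, P y a b = -P y b a) (a b : Fin n) :
    fderiv ℝ (fun y => P y a b) q = -fderiv ℝ (fun y => P y b a) q := by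
  rw [show (fun y => P y a b) = fun y => -P y b a from funext fun y => hP y a b, fderiv_fun_neg]

lemma jacobiator_swap_left (hP : ∀ y a b, P y a b = -P y b a) (i j k : Fin n) :
    jacobiator P q j i k = -jacobiator P q i j k := by
  simp only [jacobiator_eq_fderiv, fderiv_apply_swap q hP i k, fderiv_apply_swap q hP k j,
    fderiv_apply_swap q hP j i, neg_apply]
  ring

lemma jacobiator_swap_right (hP : ∀ y a b, P y a b = -P y b a) (i j k : Fin n) :
    jacobiator P q i k j = -jacobiator P q i j k := by
  simp only [jacobiator_eq_fderiv, fderiv_apply_swap q hP k j, fderiv_apply_swap q hP j i,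
    fderiv_apply_swap q hP i k, neg_apply]
  ring

end Jacobiator

lemma eq_zero_of_alternating {ι : Type*} [LinearOrder ι] {f : ι → ι → ι → ℝ}
    (swap_left : ∀ i j k, f j i k = -f i j k) (swap_right : ∀ i j k, f i k j = -f i j k)
    (of_lt : ∀ i j k, i < j → j < k → f i j k = 0) (i j k : ι) : f i j k = 0 := by
  have swap_outer : ∀ i j k, f k j i = -f i j k := fun i j k => by
    rw [swap_left, swap_right, swap_left, neg_neg]
  have cyclic : ∀ i j k, f j k i = f i j k := fun i j k => by
    rw [swap_right, swap_left, neg_neg]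
  by_cases hij : i = j
  · subst hij; linarith [swap_left i i k]
  by_cases hjk : j = k
  · subst hjk; linarith [swap_right i j j]
  by_cases hik : i = k
  · subst hik; linarith [swap_outer i j i]
  rcases lt_or_gt_of_ne hij with hij | hij <;> rcases lt_or_gt_of_ne hjk with hjk | hjk <;>
  rcases lt_or_gt_of_ne hik with hik | hik <;>
  first
  | (exfalso; order)
  | exact of_lt i j k hij hjk
  | linarith [swap_right i j k, of_lt i k j hik hjk]
  | linarith [swap_left i j k, of_lt j i k hij hik]
  | linarith [cyclic i j k, of_lt j k i hjk hik]
  | linarith [cyclic k i j, of_lt k i j hik hij]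
  | linarith [swap_outer i j k, of_lt k j i hjk hij]

def w3Upper (a : ℕ → ℝ) (x y : ℕ) : ℝ :=
  a x + (if y = x + 1 then 0 else 1) * a (x + 1) + a y + a (y + 1)

def w23Entry (a : ℕ → ℝ) (x y : ℕ) : ℝ :=
  if x < y then 1 + w3Upper a x y else if y < x then -(1 + w3Upper a y x) else 0

/-- `colDeriv (Eterm N q) b m` is the derivative of `Eterm N q m` along the `b`-th column of
`w₂ + w₃`; the truncated `m - 1` at `m = 0` is harmless because `Eterm N q 0 = 0`. -/
def colDeriv (a : ℕ → ℝ) (b m : ℕ) : ℝ :=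
  a m * (w23Entry a (m - 1) b - w23Entry a m b)

lemma w3Upper_colDeriv_cyclic_sum (a : ℕ → ℝ) (ha : a 0 = 0) {i j k : ℕ} (hij : i < j)
    (hjk : j < k) :
    w3Upper (colDeriv a i) j k - w3Upper (colDeriv a j) i k + w3Upper (colDeriv a k) i j = 0 := by
  -- All comparisons are between indices at distance at most 2 from `i`, `j` or `k`, so every
  -- `if` is decided once `j - i` and `k - j` are classified as 1, 2 or ≥ 3 and `i` as 0 or not.
  obtain ⟨d, rfl⟩ : ∃ d, j = i + (d + 1) := ⟨j - i - 1, by omega⟩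
  obtain ⟨e, rfl⟩ : ∃ e, k = i + (d + 1) + (e + 1) := ⟨k - (i + (d + 1)) - 1, by omega⟩
  rcases d with _ | _ | d <;> rcases e with _ | _ | e <;> rcases i with _ | i <;>
    simp +arith only [w3Upper, colDeriv, w23Entry, ha, Nat.zero_sub, Nat.succ_sub_one, if_true,
      if_false, zero_mul, one_mul, add_zero, zero_add, sub_zero, zero_sub, neg_neg] <;>
    ring

section StructureMatrices

variable {N : ℕ}

lemma Eterm_zero (q : Fin N → ℝ) : Eterm N q 0 = 0 := by
  simp [Eterm]

@[fun_prop]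
lemma differentiable_Eterm (m : ℕ) : Differentiable ℝ (fun q : Fin N → ℝ => Eterm N q m) := by
  unfold Eterm
  split_ifs <;> fun_prop

lemma fderiv_Eterm_apply (q : Fin N → ℝ) (m : ℕ) (g : ℕ → ℝ) :
    fderiv ℝ (fun y => Eterm N y m) q (fun l => g l) = Eterm N q m * (g (m - 1) - g m) := by
  unfold Eterm
  split_ifs
  · rw [fderiv_exp (by fun_prop), fderiv_fun_sub (by fun_prop) (by fun_prop),
      (hasFDerivAt_apply _ q).fderiv, (hasFDerivAt_apply _ q).fderiv]
    simp
  · simp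

lemma w2_add_w3_apply (q : Fin N → ℝ) (x y : Fin N) :
    (w2 N + w3 N q) x y = w23Entry (Eterm N q) x y := by
  simp only [Matrix.add_apply, w2, w3, w23Entry, w3Upper]
  split_ifs <;> ring

lemma w2_add_w3_antisymm (q : Fin N → ℝ) (x y : Fin N) :
    (w2 N + w3 N q) x y = -(w2 N + w3 N q) y x := by
  simp only [w2_add_w3_apply, w23Entry]
  split_ifs <;> first | omega | ring

lemma fderiv_w3Upper_apply (q : Fin N → ℝ) (x y : ℕ) (g : ℕ → ℝ) :
    fderiv ℝ (fun p => w3Upper (Eterm N p) x y) q (fun l => g l)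
      = w3Upper (fun m => Eterm N q m * (g (m - 1) - g m)) x y := by
  unfold w3Upper
  rw [fderiv_fun_add (by fun_prop) (by fun_prop), fderiv_fun_add (by fun_prop) (by fun_prop),
    fderiv_fun_add (by fun_prop) (by fun_prop), fderiv_const_mul (by fun_prop)]
  simp only [add_apply, smul_apply, fderiv_Eterm_apply, smul_eq_mul]

lemma fderiv_w2_add_w3_apply_of_lt (q : Fin N → ℝ) {x y : Fin N} (hxy : x < y) (b : Fin N) :
    fderiv ℝ (fun p => (w2 N + w3 N p) x y) q (fun l => (w2 N + w3 N q) l b)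
      = w3Upper (colDeriv (Eterm N q) b) x y := by
  have hxy_entry : (fun p => (w2 N + w3 N p) x y) = fun p => 1 + w3Upper (Eterm N p) x y :=
    funext fun p => by rw [w2_add_w3_apply, w23Entry, if_pos (Fin.lt_def.mp hxy)]
  rw [hxy_entry, fderiv_const_add]
  simp only [w2_add_w3_apply]
  exact fderiv_w3Upper_apply q x y (w23Entry (Eterm N q) · b)

lemma jacobiator_w2_add_w3_of_lt (q : Fin N → ℝ) {i j k : Fin N} (hij : i < j) (hjk : j < k) :
    jacobiator (fun p => w2 N + w3 N p) q i j k = 0 := by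
  simp only [jacobiator_eq_fderiv]
  rw [fderiv_apply_swap q (w2_add_w3_antisymm ·) k i, neg_apply,
    fderiv_w2_add_w3_apply_of_lt q hjk, fderiv_w2_add_w3_apply_of_lt q (hij.trans hjk),
    fderiv_w2_add_w3_apply_of_lt q hij]
  linarith [w3Upper_colDeriv_cyclic_sum (Eterm N q) (Eterm_zero q) hij hjk]

end StructureMatrices

theorem stmt8_general (N : ℕ) :
    ∀ (q : Fin N → ℝ) (i j k : Fin N),
      ∑ l : Fin N,
        ((w2 N l i + w3 N q l i) * pd (fun y => w2 N j k + w3 N y j k) q l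
          + (w2 N l j + w3 N q l j) * pd (fun y => w2 N k i + w3 N y k i) q l
          + (w2 N l k + w3 N q l k) * pd (fun y => w2 N i j + w3 N y i j) q l) = 0 := by
  intro q
  exact eq_zero_of_alternating (jacobiator_swap_left q (w2_add_w3_antisymm ·))
    (jacobiator_swap_right q (w2_add_w3_antisymm ·)) fun _ _ _ => jacobiator_w2_add_w3_of_lt q

/-- `w₂` and `w₃` are compatible: their sum satisfies the Jacobi identity. -/
theorem stmt8 (N : ℕ) (hN : 2 ≤ N) :
    ∀ (q : Fin N → ℝ) (i j k : Fin N),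
      ∑ l : Fin N,
        ((w2 N l i + w3 N q l i) * pd (fun y => w2 N j k + w3 N y j k) q l
          + (w2 N l j + w3 N q l j) * pd (fun y => w2 N k i + w3 N y k i) q l
          + (w2 N l k + w3 N q l k) * pd (fun y => w2 N i j + w3 N y i j) q l) = 0 :=
  stmt8_general N
end

section
/- Let N ≥ 3 and define G : ℝ^N → ℝ^{N-1} by G_i(q) = e^{q_i − q_{i+1}} for i = 1,…,N−1. Let w₃ be the structure matrix on ℝ^N defined for k < l by (w₃)_{kl}(q) = e^{q_{k-1}−q_k} + (1 − δ_{k+1,l}) e^{q_k−q_{k+1}} + e^{q_{l-1}−q_l} + e^{q_l−q_{l+1}} (omitting any term with an undefined index), extended by skew-symmetry; and let v₃ be the cubic Volterra structure matrix on ℝ^{N-1} whose only nonzero entries above the diagonal are (v₃)_{i,i+1}(a) = a_i a_{i+1}(a_i + a_{i+1}) and (v₃)_{i,i+2}(a) = a_i a_{i+1} a_{i+2}, extended by skew-symmetry. Then G is a Poisson map from w₃ to v₃: for all i, j ∈ {1,…,N−1} and all q ∈ ℝ^N, Σ_{k,l=1}^{N} (w₃)_{kl}(q) · ∂G_i/∂q_k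 (q) · ∂G_j/∂q_l (q) = (v₃)_{ij}(G(q)). -/
open Real

/-- The cubic Volterra structure matrix on `ℝ^n`: its only nonzero entries above
the diagonal are `(v₃)_{i,i+1} = a_i a_{i+1}(a_i + a_{i+1})` and
`(v₃)_{i,i+2} = a_i a_{i+1} a_{i+2}`, extended by skew-symmetry. -/
def v3 (n : ℕ) (a : Fin n → ℝ) : Matrix (Fin n) (Fin n) ℝ :=
  fun i j =>
    let e : Fin n → Fin n → ℝ := fun i j =>
      if j.val = i.val + 1 then a i * a j * (a i + a j)
      else if h : j.val = i.val + 2 then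
        a i * a ⟨i.val + 1, by have := j.isLt; omega⟩ * a j
      else 0
    if i.val < j.val then e i j
    else if j.val < i.val then -(e j i)
    else 0

/-- The map `G : ℝ^N → ℝ^{N-1}`, `G_i(q) = e^{q_i - q_{i+1}}`. -/
noncomputable def Gmap (N : ℕ) (q : Fin N → ℝ) : Fin (N-1) → ℝ :=
  fun i => Real.exp (q ⟨i.val, by have := i.isLt; omega⟩ -
    q ⟨i.val + 1, by have := i.isLt; omega⟩)

/-! Since `∂G_i/∂q = G_i (e_i - e_{i+1})`, the pulled-back bracket `{G_i, G_j}` is `G_i G_j` times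
the second difference `w_{i,j} - w_{i,j+1} - w_{i+1,j} + w_{i+1,j+1}` of `w₃`. Both `w₃` and `v₃`
are skew, so it suffices to take `i ≤ j`. For `k < l` and `l ≠ k + 1`, `(w₃)_{kl}` is a term
depending on `k` alone plus one depending on `l` alone, so the second difference vanishes for
`j ≥ i + 3`; for `j = i, i + 1, i + 2` the zero diagonal of `w₃` and its Kronecker term
`δ_{k+1,l}` leave exactly the Volterra entries `a_i a_{i+1} (a_i + a_{i+1})` and
`a_i a_{i+1} a_{i+2}`. -/

open Matrix

section Bilinear

variable {ι R : Type*} [Fintype ι]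

lemma sum_sum_mul_mul_eq_dotProduct_mulVec [CommSemiring R] (M : Matrix ι ι R) (x y : ι → R) :
    ∑ k, ∑ l, M k l * x k * y l = x ⬝ᵥ M *ᵥ y := by
  simp only [dotProduct, mulVec, Finset.mul_sum]
  exact Finset.sum_congr rfl fun _ _ => Finset.sum_congr rfl fun _ _ => by ring

lemma dotProduct_mulVec_eq_neg_of_transpose_eq_neg [CommRing R] {M : Matrix ι ι R} (hM : Mᵀ = -M)
    (x y : ι → R) : x ⬝ᵥ M *ᵥ y = -(y ⬝ᵥ M *ᵥ x) := by
  rw [dotProduct_mulVec, ← mulVec_transpose, hM, dotProduct_comm, neg_mulVec, dotProduct_neg]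

lemma single_sub_single_dotProduct_mulVec [Ring R] [DecidableEq ι] (M : Matrix ι ι R)
    (a b c d : ι) :
    (Pi.single a 1 - Pi.single b 1) ⬝ᵥ M *ᵥ (Pi.single c 1 - Pi.single d 1)
      = M a c - M a d - (M b c - M b d) := by
  simp only [mulVec_sub, sub_dotProduct, mulVec_single_one, single_one_dotProduct, Pi.sub_apply]
  abel

end Bilinear

lemma pd_exp_sub {n : ℕ} (x : Fin n → ℝ) (a b : Fin n) :
    pd (fun y => exp (y a - y b)) x = exp (x a - x b) • (Pi.single a 1 - Pi.single b 1) := by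
  have hlin : HasFDerivAt (fun y : Fin n → ℝ => y a - y b)
      (ContinuousLinearMap.proj a - ContinuousLinearMap.proj b : (Fin n → ℝ) →L[ℝ] ℝ) x :=
    ((ContinuousLinearMap.proj a : (Fin n → ℝ) →L[ℝ] ℝ).hasFDerivAt).sub
      (ContinuousLinearMap.proj b : (Fin n → ℝ) →L[ℝ] ℝ).hasFDerivAt
  funext l
  simp [pd, hlin.exp.fderiv, Pi.single_apply, mul_sub, eq_comm]

section Toda

variable {N : ℕ}

def lowerIdx (i : Fin (N - 1)) : Fin N := ⟨i.val, by omega⟩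

def upperIdx (i : Fin (N - 1)) : Fin N := ⟨i.val + 1, by omega⟩

lemma pd_Gmap (q : Fin N → ℝ) (i : Fin (N - 1)) :
    pd (fun y => Gmap N y i) q
      = Gmap N q i • (Pi.single (lowerIdx i) 1 - Pi.single (upperIdx i) 1) :=
  pd_exp_sub q (lowerIdx i) (upperIdx i)

lemma Eterm_succ (q : Fin N → ℝ) (i : Fin (N - 1)) : Eterm N q (i.val + 1) = Gmap N q i := by
  simp [Eterm, Gmap, show i.val + 1 < N by omega]

lemma w3_transpose (q : Fin N → ℝ) : (w3 N q)ᵀ = -w3 N q := by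
  ext k l
  simp only [transpose_apply, Matrix.neg_apply, w3]
  split_ifs <;> first | omega | ring

lemma v3_apply_swap {n : ℕ} (a : Fin n → ℝ) (i j : Fin n) : v3 n a j i = -v3 n a i j := by
  simp only [v3]
  split_ifs <;> first | omega | ring

lemma Gmap_mul_Gmap_mul_w3_eq_v3 (q : Fin N → ℝ) {i j : Fin (N - 1)} (hij : i ≤ j) :
    Gmap N q i * Gmap N q j * (w3 N q (lowerIdx i) (lowerIdx j) - w3 N q (lowerIdx i) (upperIdx j)
        - (w3 N q (upperIdx i) (lowerIdx j) - w3 N q (upperIdx i) (upperIdx j)))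
      = v3 (N - 1) (Gmap N q) i j := by
  obtain ⟨a, ha⟩ := i
  obtain ⟨b, hb⟩ := j
  -- through the one-based `Eterm`, every index becomes a natural number in `a` and `b`
  simp only [w3, v3, lowerIdx, upperIdx, ← Eterm_succ, dite_eq_ite]
  simp only [Fin.mk_le_mk] at hij
  obtain rfl | rfl | rfl | hfar : b = a ∨ b = a + 1 ∨ b = a + 2 ∨ a + 3 ≤ b := by omega
  · simp
  · simp [add_assoc]
  · simp [add_assoc, add_sub_add_comm, mul_comm, mul_left_comm, mul_assoc]
  · simp [add_assoc, hij, show a < b by omega, show a + 1 < b by omega, show b ≠ a + 1 by omega,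
      show b ≠ a + 2 by omega, show b ≠ a by omega]

lemma pd_Gmap_dotProduct_w3_mulVec_pd_Gmap_of_le (q : Fin N → ℝ) {i j : Fin (N - 1)}
    (hij : i ≤ j) :
    pd (fun y => Gmap N y i) q ⬝ᵥ w3 N q *ᵥ pd (fun y => Gmap N y j) q
      = v3 (N - 1) (Gmap N q) i j := by
  rw [pd_Gmap, pd_Gmap, smul_dotProduct, mulVec_smul, dotProduct_smul,
    single_sub_single_dotProduct_mulVec, smul_eq_mul, smul_eq_mul, ← mul_assoc,
    Gmap_mul_Gmap_mul_w3_eq_v3 q hij]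

end Toda

theorem stmt11_general (N : ℕ) (q : Fin N → ℝ) (i j : Fin (N-1)) :
    ∑ k : Fin N, ∑ l : Fin N,
        w3 N q k l * pd (fun y => Gmap N y i) q k * pd (fun y => Gmap N y j) q l
      = v3 (N-1) (Gmap N q) i j := by
  rw [sum_sum_mul_mul_eq_dotProduct_mulVec]
  rcases le_total i j with hij | hji
  · exact pd_Gmap_dotProduct_w3_mulVec_pd_Gmap_of_le q hij
  · rw [dotProduct_mulVec_eq_neg_of_transpose_eq_neg (w3_transpose q),
      pd_Gmap_dotProduct_w3_mulVec_pd_Gmap_of_le q hji, v3_apply_swap, neg_neg]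

/-- `G` is a Poisson map from `w₃` to the cubic Volterra bracket `v₃`. -/
theorem stmt11 (N : ℕ) (hN : 3 ≤ N) (q : Fin N → ℝ) (i j : Fin (N-1)) :
    ∑ k : Fin N, ∑ l : Fin N,
        w3 N q k l * pd (fun y => Gmap N y i) q k * pd (fun y => Gmap N y j) q l
      = v3 (N-1) (Gmap N q) i j :=
  stmt11_general N q i j
end

section
/- Let N ≥ 2. On ℝ^{2N} with coordinates (q,p), let J₁ = [[0, I_N],[−I_N, 0]] be the canonical symplectic structure matrix and let J₂ = [[A, B],[−B, C]] be the Das–Okubo structure matrix, where A is the constant skew-symmetric N×N matrix with A_{ij} = 1 for i < j, B = diag(−p₁,…,−p_N), and C is skew-symmetric with only nonzero entries C_{i,i+1} = e^{q_i−q_{i+1}} = −C_{i+1,i}. Let h₁(q,p) = −(p₁ + ⋯ + p_N) and h₂(q,p) = Σ_{i=1}^{N} p_i²/2 + Σ_{i=1}^{N-1} e^{q_i−q_{i+1}}. Then J₁ dh₂ = J₂ dh₁ as vector fields on ℝ^{2N}: both have q-components p_i and p-components e^{q_{i-1}−q_i} − e^{q_i−q_{i+1}} (omitting undefined terms at i =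 1 and i = N). -/
open Real

/-- One-based exponential term in the `q`-variables of `x ∈ ℝ^{2N}`
(positions `0,…,N-1`): `e^{q_m - q_{m+1}}` for `1 ≤ m ≤ N-1`, else `0`. -/
noncomputable def EtermQ (N : ℕ) (x : Fin (2*N) → ℝ) (m : ℕ) : ℝ :=
  if h : 1 ≤ m ∧ m < N then
    Real.exp (x ⟨m - 1, by omega⟩ - x ⟨m, by omega⟩)
  else 0

/-- The canonical symplectic structure matrix `J₁ = [[0, I],[−I, 0]]` on `ℝ^{2N}`. -/
def J1mat (N : ℕ) : Matrix (Fin (2*N)) (Fin (2*N)) ℝ :=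
  fun k l =>
    if k.val < N ∧ l.val = k.val + N then 1
    else if l.val < N ∧ k.val = l.val + N then -1
    else 0

/-- The Das–Okubo structure matrix `J₂ = [[A,B],[−B,C]]` on `ℝ^{2N}` with
coordinates `(q₁,…,q_N,p₁,…,p_N)`:  `A_{ij} = 1` for `i < j`,
`B = diag(-p₁,…,-p_N)`, `C_{i,i+1} = e^{q_i-q_{i+1}} = -C_{i+1,i}`. -/
noncomputable def J2mat (N : ℕ) (x : Fin (2*N) → ℝ) : Matrix (Fin (2*N)) (Fin (2*N)) ℝ :=
  fun k l =>
    if k.val < N ∧ l.val < N then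
      (if k.val < l.val then 1 else if l.val < k.val then -1 else 0)
    else if k.val < N ∧ N ≤ l.val then
      (if l.val = k.val + N then -(x l) else 0)
    else if N ≤ k.val ∧ l.val < N then
      (if k.val = l.val + N then x k else 0)
    else
      (if h : l.val = k.val + 1 then
        Real.exp (x ⟨k.val - N, by have := k.isLt; omega⟩ -
          x ⟨k.val - N + 1, by have := l.isLt; omega⟩)
      else if h' : k.val = l.val + 1 then
        -(Real.exp (x ⟨l.val - N, by have := l.isLt; omega⟩ -
          x ⟨l.val - N + 1, by have := k.isLt; omega⟩))
      else 0)

/-- `h₁(q,p) = -(p₁ + ⋯ + p_N)`. -/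
def h1 (N : ℕ) (x : Fin (2*N) → ℝ) : ℝ :=
  -(∑ i : Fin N, x ⟨N + i.val, by have := i.isLt; omega⟩)

/-- The Toda Hamiltonian `h₂(q,p) = Σ p_i²/2 + Σ e^{q_i - q_{i+1}}`. -/
noncomputable def h2 (N : ℕ) (x : Fin (2*N) → ℝ) : ℝ :=
  ∑ i : Fin N, (x ⟨N + i.val, by have := i.isLt; omega⟩)^2 / 2
    + ∑ i : Fin (N-1),
        Real.exp (x ⟨i.val, by have := i.isLt; omega⟩ -
          x ⟨i.val + 1, by have := i.isLt; omega⟩)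

/-- The Toda vector field on `ℝ^{2N}`: `q`-components `p_i`, `p`-components
`e^{q_{i-1}-q_i} - e^{q_i-q_{i+1}}` (undefined terms omitted). -/
noncomputable def todaField (N : ℕ) (x : Fin (2*N) → ℝ) (k : Fin (2*N)) : ℝ :=
  if h : k.val < N then x ⟨N + k.val, by omega⟩
  else EtermQ N x (k.val - N) - EtermQ N x (k.val - N + 1)

/-!
Since `h₁` is linear, `dh₁ = (0, -1, …, -1)`. Hence row `i < N` of `J₂ dh₁` only sees the
diagonal block `B`, giving `p_i`, and row `N + i` is minus the `i`-th row sum of the tridiagonal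
block `C`, giving `e^{q_{i-1}-q_i} - e^{q_i-q_{i+1}}`. On the other side
`J₁ dh₂ = (∂h₂/∂p, -∂h₂/∂q)`, and `∂h₂/∂q_i = e^{q_i-q_{i+1}} - e^{q_{i-1}-q_i}`, `∂h₂/∂p_i = p_i`.
-/

open Finset

lemma pd_eq_of_hasFDerivAt {n : ℕ} {f : (Fin n → ℝ) → ℝ} {L : (Fin n → ℝ) →L[ℝ] ℝ}
    {x : Fin n → ℝ} (hf : HasFDerivAt f L x) (l : Fin n) : pd f x l = L (Pi.single l 1) := by
  rw [pd, hf.fderiv]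

lemma sum_mul_single_of_val_eq_add {m n : ℕ} (e : Fin m → Fin n) (s : ℕ)
    (he : ∀ i, (e i).val = i.val + s) (c : Fin m → ℝ) (g : Fin n → ℝ) (hc : ∀ i, c i = g (e i))
    (l : Fin n) :
    ∑ i, c i * (Pi.single l 1 : Fin n → ℝ) (e i) =
      if s ≤ l.val ∧ l.val < m + s then g l else 0 := by
  split_ifs with hl
  · have hel : e ⟨l - s, by omega⟩ = l := Fin.ext (by rw [he, Fin.val_mk]; omega)
    rw [Fintype.sum_eq_single ⟨l - s, by omega⟩, hc, hel, Pi.single_eq_same, mul_one]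
    intro i hi
    refine mul_eq_zero_of_right _ (Pi.single_eq_of_ne (fun h => hi (Fin.ext ?_)) _)
    have hei := he i
    rw [h] at hei
    simp only
    omega
  · refine sum_eq_zero fun i _ => mul_eq_zero_of_right _ (Pi.single_eq_of_ne (fun h => ?_) _)
    have hei := he i
    rw [h] at hei
    omega

lemma sum_single_of_val_eq_add {m n : ℕ} (e : Fin m → Fin n) (s : ℕ)
    (he : ∀ i, (e i).val = i.val + s) (l : Fin n) :
    ∑ i, (Pi.single l 1 : Fin n → ℝ) (e i) = if s ≤ l.val ∧ l.val < m + s then 1 else 0 := by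
  simpa using sum_mul_single_of_val_eq_add e s he 1 1 (fun _ => rfl) l

lemma Fin.sum_ite_val_eq {M : Type*} [AddCommMonoid M] {n : ℕ} (m : ℕ) (c : M) :
    ∑ l : Fin n, (if l.val = m then c else 0) = if m < n then c else 0 := by
  rw [Fin.sum_univ_eq_sum_range (fun j => if j = m then c else 0), sum_ite_eq']
  simp only [mem_range]

lemma hasFDerivAt_apply_sq_div_two {ι : Type*} [Fintype ι] (x : ι → ℝ) (j : ι) :
    HasFDerivAt (fun y : ι → ℝ => y j ^ 2 / 2)
      (x j • ContinuousLinearMap.proj (R := ℝ) (φ := fun _ : ι => ℝ) j) x := by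
  simp_rw [div_eq_mul_inv]
  refine (HasFDerivAt.mul_const (HasFDerivAt.pow (hasFDerivAt_apply j x) 2) 2⁻¹).congr_fderiv ?_
  ext v
  simp only [Nat.add_one_sub_one, pow_one, nsmul_eq_mul, Nat.cast_ofNat, smul_apply,
    ContinuousLinearMap.proj_apply, smul_eq_mul]
  ring

section Toda

variable {N : ℕ} (x : Fin (2*N) → ℝ)

lemma EtermQ_of_not {m : ℕ} (hm : ¬(1 ≤ m ∧ m < N)) : EtermQ N x m = 0 := dif_neg hm

lemma EtermQ_succ {i : ℕ} (hi : i + 1 < N) :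
    EtermQ N x (i + 1) = Real.exp (x ⟨i, by omega⟩ - x ⟨i + 1, by omega⟩) := by
  rw [EtermQ, dif_pos (by omega)]
  rfl

lemma hasFDerivAt_h1 :
    HasFDerivAt (h1 N)
      (-∑ i : Fin N, ContinuousLinearMap.proj (R := ℝ) (φ := fun _ : Fin (2*N) => ℝ)
        ⟨N + i.val, by omega⟩) x :=
  (HasFDerivAt.fun_sum fun (i : Fin N) _ =>
    hasFDerivAt_apply (⟨N + i.val, by omega⟩ : Fin (2*N)) x).neg

lemma pd_h1 (l : Fin (2*N)) : pd (h1 N) x l = if l.val < N then 0 else -1 := by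
  rw [pd_eq_of_hasFDerivAt (hasFDerivAt_h1 x)]
  simp only [neg_apply, FunLike.coe_sum, Finset.sum_apply, ContinuousLinearMap.proj_apply]
  rw [sum_single_of_val_eq_add _ N (fun i => by simp only; omega)]
  split_ifs <;> first | omega | simp

lemma hasFDerivAt_h2 :
    HasFDerivAt (h2 N)
      ((∑ i : Fin N, x ⟨N + i.val, by omega⟩ •
          ContinuousLinearMap.proj (R := ℝ) (φ := fun _ : Fin (2*N) => ℝ) ⟨N + i.val, by omega⟩)
       + ∑ i : Fin (N - 1), Real.exp (x ⟨i.val, by omega⟩ - x ⟨i.val + 1, by omega⟩) •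
          (ContinuousLinearMap.proj (R := ℝ) (φ := fun _ : Fin (2*N) => ℝ) ⟨i.val, by omega⟩
            - ContinuousLinearMap.proj ⟨i.val + 1, by omega⟩)) x :=
  (HasFDerivAt.fun_sum fun _ _ => hasFDerivAt_apply_sq_div_two x _).add
    (HasFDerivAt.fun_sum fun _ _ =>
      ((hasFDerivAt_apply _ x).sub (hasFDerivAt_apply _ x)).exp)

lemma pd_h2 (l : Fin (2*N)) :
    pd (h2 N) x l = if l.val < N then EtermQ N x (l.val + 1) - EtermQ N x l.val else x l := by
  rw [pd_eq_of_hasFDerivAt (hasFDerivAt_h2 x)]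
  simp only [add_apply, FunLike.coe_sum, Finset.sum_apply, smul_apply, sub_apply,
    ContinuousLinearMap.proj_apply, smul_eq_mul, mul_sub, sum_sub_distrib]
  rw [sum_mul_single_of_val_eq_add _ N (fun i => by simp only; omega) _ x (fun _ => rfl),
    sum_mul_single_of_val_eq_add (fun i : Fin (N - 1) => (⟨i.val, by omega⟩ : Fin (2*N))) 0
      (fun i => rfl) _ (fun j => EtermQ N x (j.val + 1))
      (fun i => (EtermQ_succ x (i := i.val) (by omega)).symm),
    sum_mul_single_of_val_eq_add (fun i : Fin (N - 1) => (⟨i.val + 1, by omega⟩ : Fin (2*N))) 1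
      (fun i => rfl) _ (fun j => EtermQ N x j.val)
      (fun i => (EtermQ_succ x (i := i.val) (by omega)).symm),
    ite_eq_left_iff.mpr fun _ => (EtermQ_of_not x (by omega)).symm,
    ite_eq_left_iff.mpr fun _ => (EtermQ_of_not x (by omega)).symm]
  split_ifs
  · omega
  · rw [EtermQ_of_not x (by omega), EtermQ_of_not x (by omega), sub_self, add_zero]
  · rw [zero_add]
  · omega

lemma sum_J1mat_mul_of_lt (v : Fin (2*N) → ℝ) {k : Fin (2*N)} (hk : k.val < N) :
    ∑ l, J1mat N k l * v l = v ⟨N + k.val, by omega⟩ := by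
  rw [Fintype.sum_eq_single ⟨N + k.val, by omega⟩]
  · rw [J1mat, if_pos ⟨hk, by dsimp only; omega⟩, one_mul]
  · intro l hl
    simp only [J1mat, ne_eq, Fin.ext_iff] at hl ⊢
    split_ifs <;> first | omega | simp

lemma sum_J1mat_mul_of_le (v : Fin (2*N) → ℝ) {k : Fin (2*N)} (hk : N ≤ k.val) :
    ∑ l, J1mat N k l * v l = -v ⟨k.val - N, by omega⟩ := by
  rw [Fintype.sum_eq_single ⟨k.val - N, by omega⟩]
  · rw [J1mat, if_neg (by omega), if_pos ⟨by dsimp only; omega, by dsimp only; omega⟩, neg_one_mul]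
  · intro l hl
    simp only [J1mat, ne_eq, Fin.ext_iff] at hl ⊢
    split_ifs <;> first | omega | simp

lemma sum_J2mat_mul_pd_h1_of_lt {k : Fin (2*N)} (hk : k.val < N) :
    ∑ l, J2mat N x k l * pd (h1 N) x l = x ⟨N + k.val, by omega⟩ := by
  rw [Fintype.sum_eq_single ⟨N + k.val, by omega⟩]
  · simp [J2mat, pd_h1, hk, add_comm]
  · intro l hl
    simp only [J2mat, pd_h1, ne_eq, Fin.ext_iff] at hl ⊢
    split_ifs <;> first | omega | simp

lemma J2mat_mul_pd_h1_of_le {k : Fin (2*N)} (hk : N ≤ k.val) (l : Fin (2*N)) :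
    J2mat N x k l * pd (h1 N) x l =
      (if l.val = k.val - 1 then EtermQ N x (k.val - N) else 0)
        - (if l.val = k.val + 1 then EtermQ N x (k.val - N + 1) else 0) := by
  rw [pd_h1]
  by_cases hl : l.val < N
  · have hkN : (if l.val = k.val - 1 then EtermQ N x (k.val - N) else 0) = 0 :=
      ite_eq_right_iff.mpr fun _ => EtermQ_of_not x (by omega)
    rw [if_pos hl, mul_zero, hkN, if_neg (by omega), sub_zero]
  rw [if_neg hl, J2mat, if_neg (by omega), if_neg (by omega), if_neg (by omega)]
  split_ifs
  · omega
  · rw [EtermQ_succ x (by omega)]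
    ring
  · rw [show k.val - N = l.val - N + 1 by omega, EtermQ_succ x (by omega)]
    ring
  · omega
  · omega
  · simp

lemma sum_J2mat_mul_pd_h1_of_le {k : Fin (2*N)} (hk : N ≤ k.val) :
    ∑ l, J2mat N x k l * pd (h1 N) x l = EtermQ N x (k.val - N) - EtermQ N x (k.val - N + 1) := by
  simp only [J2mat_mul_pd_h1_of_le x hk, sum_sub_distrib, Fin.sum_ite_val_eq]
  rw [if_pos (by omega), ite_eq_left_iff.mpr fun _ => (EtermQ_of_not x (by omega)).symm]

end Toda

theorem stmt14_general (N : ℕ) (x : Fin (2*N) → ℝ) (k : Fin (2*N)) :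
    (∑ l : Fin (2*N), J1mat N k l * pd (h2 N) x l = todaField N x k)
    ∧ (∑ l : Fin (2*N), J2mat N x k l * pd (h1 N) x l = todaField N x k) := by
  rcases lt_or_ge k.val N with hk | hk
  · rw [todaField, dif_pos hk, sum_J1mat_mul_of_lt _ hk, pd_h2, if_neg (by dsimp only; omega),
      sum_J2mat_mul_pd_h1_of_lt x hk]
    exact ⟨rfl, rfl⟩
  · rw [todaField, dif_neg (by omega), sum_J1mat_mul_of_le _ hk, pd_h2,
      if_pos (by dsimp only; omega), sum_J2mat_mul_pd_h1_of_le x hk]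
    exact ⟨by ring, rfl⟩

/-- `J₁ dh₂ = J₂ dh₁` as vector fields on `ℝ^{2N}`: both equal the Toda field. -/
theorem stmt14 (N : ℕ) (hN : 2 ≤ N) (x : Fin (2*N) → ℝ) (k : Fin (2*N)) :
    (∑ l : Fin (2*N), J1mat N k l * pd (h2 N) x l = todaField N x k)
    ∧ (∑ l : Fin (2*N), J2mat N x k l * pd (h1 N) x l = todaField N x k) :=
  stmt14_general N x k
end
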